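/- Let the eigenvalues of a positive operator satisfy $\sigma_i \le \gamma e^{-p i}$ for all $i \ge 1$, for some $\gamma, p > 0$. Then for every $\alpha > 0$, the effective dimension $d_\alpha = \sum_{i=1}^{\infty} \frac{\sigma_i}{\sigma_i + \alpha}$ satisfies $d_\alpha \le \frac{1}{p} \ln(1 + \gamma/\alpha)$. -/

import Mathlib

/-!
Since `x ↦ x / (x + α)` is increasing, the `i`-th term is at most `g i` with
`g x = γ e^{-px} / (γ e^{-px} + α)`. As `g` is decreasing, the partial sums are dominated by
`∫₀ⁿ g`, and `-(1/p) log (γ e^{-px} + α)` is an antiderivative of `g`, so the integral is at most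
`(log (γ + α) - log α) / p`.
-/

open Real intervalIntegral

lemma div_add_le_div_add_of_le {x y α : ℝ} (hx : 0 ≤ x) (hα : 0 < α) (hxy : x ≤ y) :
    x / (x + α) ≤ y / (y + α) := by
  rw [div_le_div_iff₀ (by positivity) (by linarith)]
  nlinarith

section ExpDecay

variable {γ α : ℝ}

lemma antitone_mul_exp_div_mul_exp_add (hγ : 0 ≤ γ) (hα : 0 < α) {p : ℝ} (hp : 0 ≤ p) :
    Antitone fun x => γ * exp (-p * x) / (γ * exp (-p * x) + α) := by
  intro x y hxy
  exact div_add_le_div_add_of_le (by positivity) hα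
    (mul_le_mul_of_nonneg_left (exp_le_exp.2 (by nlinarith)) hγ)

lemma hasDerivAt_log_mul_exp_add (hγ : 0 ≤ γ) (hα : 0 < α) (p x : ℝ) :
    HasDerivAt (fun x => log (γ * exp (-p * x) + α))
      (-p * (γ * exp (-p * x) / (γ * exp (-p * x) + α))) x := by
  have hexp : HasDerivAt (fun x => γ * exp (-p * x) + α) (γ * (exp (-p * x) * -p)) x := by
    simpa using (((hasDerivAt_id x).const_mul (-p)).exp.const_mul γ).add_const α
  convert hexp.log (by positivity) using 1
  ring

lemma integral_mul_exp_div_mul_exp_add (hγ : 0 ≤ γ) (hα : 0 < α) {p : ℝ} (hp : 0 < p)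
    (a b : ℝ) :
    ∫ x in a..b, γ * exp (-p * x) / (γ * exp (-p * x) + α) =
      (log (γ * exp (-p * a) + α) - log (γ * exp (-p * b) + α)) / p := by
  have hint : IntervalIntegrable (fun x => -p * (γ * exp (-p * x) / (γ * exp (-p * x) + α)))
      MeasureTheory.volume a b :=
    ((antitone_mul_exp_div_mul_exp_add hγ hα hp.le).antitoneOn _).intervalIntegrable.const_mul _
  have hftc := integral_eq_sub_of_hasDerivAt (fun x _ => hasDerivAt_log_mul_exp_add hγ hα p x) hint
  rw [integral_const_mul] at hftc
  rw [eq_div_iff hp.ne']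
  linarith

lemma integral_mul_exp_div_mul_exp_add_le (hγ : 0 ≤ γ) (hα : 0 < α) {p : ℝ} (hp : 0 < p)
    {b : ℝ} :
    ∫ x in (0)..b, γ * exp (-p * x) / (γ * exp (-p * x) + α) ≤ log (1 + γ / α) / p := by
  have hlog : log (1 + γ / α) = log (γ + α) - log α := by
    rw [← log_div (by positivity) hα.ne', add_div, div_self hα.ne', add_comm]
  have hα_le : log α ≤ log (γ * exp (-p * b) + α) :=
    log_le_log hα (le_add_of_nonneg_left (by positivity))
  rw [integral_mul_exp_div_mul_exp_add hγ hα hp, hlog, mul_zero, exp_zero, mul_one]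
  gcongr

end ExpDecay

/-- Effective dimension under exponential eigenvalue decay:
if `σ_i ≤ γ e^{-p i}` for all `i ≥ 1`, then
`∑_{i≥1} σ_i/(σ_i+α) ≤ (1/p) log(1 + γ/α)`. -/
theorem effective_dim_exponential_decay (σ : ℕ → ℝ) (γ p α : ℝ)
    (hγ : 0 < γ) (hp : 0 < p) (hα : 0 < α)
    (hσ0 : ∀ i, 0 ≤ σ i)
    (hσ : ∀ i : ℕ, 1 ≤ i → σ i ≤ γ * Real.exp (-p * i)) :
    (∑' i : ℕ, σ (i + 1) / (σ (i + 1) + α)) ≤ (1 / p) * Real.log (1 + γ / α) := by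
  set g := fun x : ℝ => γ * exp (-p * x) / (γ * exp (-p * x) + α)
  have hterm (i : ℕ) : σ (i + 1) / (σ (i + 1) + α) ≤ g (0 + ↑(i + 1)) := by
    simpa [g] using div_add_le_div_add_of_le (hσ0 _) hα (hσ (i + 1) i.succ_pos)
  refine Real.tsum_le_of_sum_range_le (fun i => div_nonneg (hσ0 _) (by linarith [hσ0 (i + 1)]))
    fun n => ?_
  calc ∑ i ∈ Finset.range n, σ (i + 1) / (σ (i + 1) + α)
      ≤ ∑ i ∈ Finset.range n, g (0 + ↑(i + 1)) := Finset.sum_le_sum fun i _ => hterm i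
    _ ≤ ∫ x in (0)..0 + n, g x :=
        ((antitone_mul_exp_div_mul_exp_add hγ.le hα hp.le).antitoneOn _).sum_le_integral
    _ ≤ 1 / p * log (1 + γ / α) := by
        rw [one_div_mul_eq_div]; exact integral_mul_exp_div_mul_exp_add_le hγ.le hα hp
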